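/- Let K be an algebraically closed field of characteristic p > 0, let n be a positive integer and let ζ = Σ_j c_j t^j ∈ K[[t]] be a nonzero power series satisfying the minimality condition with respect to n. Let M be a positive integer and let ζ_{<M} := Σ_{j<M} c_j t^j be the truncation of ζ below degree M. Let d := gcd of n together with all j < M such that c_j ≠ 0, and set m := n/d (so m is the minimal common denominator of the exponents j/n occurring in the truncated Newton–Puiseux series). Then the set { rescale_ρ ζ_{<M} : ρ ∈ U_n } has exactly m[:p] elements. -/

import Mathlib

/-!
Two rescalings of a series agree iff `ρ ^ j = σ ^ j` on its support. For `n`-th roots of unity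
`ρ, σ` this says that the order of `ρ / σ` divides `n` and every exponent of the truncation,
i.e. `ρ ^ d = σ ^ d`. So the distinct rescalings are counted by the image of `ρ ↦ ρ ^ d`, which is
`U_{n/d}` since `K` is algebraically closed. Finally `x ↦ x ^ p` is injective in characteristic
`p`, so `U_m = U_{m[:p]}`, and this has `m[:p]` elements because `X ^ m[:p] - 1` is separable.
-/

open scoped Classical

noncomputable section

namespace PaperStmt

/-- The formal partial derivative `∂_i f` of a formal power series in two variables:
its coefficient at a monomial `m` is `(m i + 1)` times the coefficient of `f` at
`m + eᵢ`. -/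
def pderiv (K : Type*) [Field K] (i : Fin 2) (f : MvPowerSeries (Fin 2) K) :
    MvPowerSeries (Fin 2) K :=
  fun m => ((m i + 1 : ℕ) : K) * MvPowerSeries.coeff (m + Finsupp.single i 1) f

/-- The intersection number `I(f,g) := dim_K K[[X,Y]]/(f,g)`. -/
def inum (K : Type*) [Field K] (f g : MvPowerSeries (Fin 2) K) : ℕ :=
  Module.finrank K (MvPowerSeries (Fin 2) K ⧸ Ideal.span {f, g})

/-- The Milnor number `μ(f) := dim_K K[[X,Y]]/(∂_X f, ∂_Y f)`. -/
def milnor (K : Type*) [Field K] (f : MvPowerSeries (Fin 2) K) : ℕ :=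
  inum K (pderiv K 0 f) (pderiv K 1 f)

/-- `ζ ∈ K[[t]]` satisfies the minimality condition with respect to `n`: the only
positive integer dividing both `n` and every element of the support of `ζ` is `1`. -/
def MinimalDenom (K : Type*) [Field K] (n : ℕ) (ζ : PowerSeries K) : Prop :=
  ∀ d : ℕ, d ∣ n → (∀ j : ℕ, PowerSeries.coeff j ζ ≠ 0 → d ∣ j) → d = 1

/-- `b`, `e` are the characteristic data of `ζ` with respect to `n`, with `h` steps:
`e 0 = n`, `b 0 = 0`, for `j < h` the number `b (j+1)` is the least element of the
support of `ζ` not divisible by `e j` and `e (j+1) = gcd (e j) (b (j+1))`;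
the process stops exactly at `h`, i.e. `e h = 1` and `e j ≠ 1` for `j < h`. -/
def CharData (K : Type*) [Field K] (n : ℕ) (ζ : PowerSeries K) (h : ℕ)
    (b e : ℕ → ℕ) : Prop :=
  e 0 = n ∧ b 0 = 0 ∧ (∀ j, j < h → e j ≠ 1) ∧ e h = 1 ∧
  (∀ j, j < h →
    IsLeast {k : ℕ | PowerSeries.coeff k ζ ≠ 0 ∧ ¬ e j ∣ k} (b (j + 1))) ∧
  (∀ j, j < h → e (j + 1) = Nat.gcd (e j) (b (j + 1)))

/-- `expandPS K n φ = φ(t^n)`: the image of `φ` under the (continuous) `K`-algebra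
homomorphism `K[[x]] → K[[t]]` sending `x` to `t^n`. -/
def expandPS (K : Type*) [Field K] (n : ℕ) (φ : PowerSeries K) : PowerSeries K :=
  PowerSeries.mk fun j => if n ∣ j then PowerSeries.coeff (j / n) φ else 0

/-- A polynomial in `Y` with coefficients in `K[[X]]`, viewed as an element
of `K[[X,Y]]`. -/
def polyToMv (K : Type*) [Field K] (q : Polynomial (PowerSeries K)) :
    MvPowerSeries (Fin 2) K :=
  fun m => PowerSeries.coeff (m 0) (q.coeff (m 1))

/-- `f(t^n, ζ(t)) = 0`: the series `ζ` is a root of the polynomial obtained from `f`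
by mapping its coefficients through the `K`-algebra homomorphism `K[[x]] → K[[t]]`
sending `x` to `t^n`. -/
def IsNPRoot (K : Type*) [Field K] (n : ℕ) (f : Polynomial (PowerSeries K))
    (ζ : PowerSeries K) : Prop :=
  ∑ i ∈ Finset.range (f.natDegree + 1), expandPS K n (f.coeff i) * ζ ^ i = 0

/-- `nuFun K n ζ H = H(t^n, ζ(t))`: the image of `H ∈ K[[X,Y]]` under the continuous
`K`-algebra homomorphism `K[[X,Y]] → K[[t]]` sending `X ↦ t^n` and `Y ↦ ζ(t)`
(for `1 ≤ n` and `ζ(0) = 0`). -/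
def nuFun (K : Type*) [Field K] (n : ℕ) (ζ : PowerSeries K)
    (H : MvPowerSeries (Fin 2) K) : PowerSeries K :=
  PowerSeries.mk fun k =>
    ∑ a ∈ Finset.range (k + 1), ∑ c ∈ Finset.range (k + 1),
      if n * a ≤ k then
        MvPowerSeries.coeff (Finsupp.single 0 a + Finsupp.single 1 c) H *
          PowerSeries.coeff (k - n * a) (ζ ^ c)
      else 0

/-- `n[:p] = n · p^{-ν_p(n)}`, the part of `n` coprime to `p`. -/
def coprimePart (p n : ℕ) : ℕ := n / p ^ padicValNat p n

open PowerSeries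

theorem ncard_image_eq_ncard_image_of_eq_iff {α β γ : Type*} {U : Set α} {F : α → β}
    {g : α → γ} (h : ∀ a ∈ U, ∀ b ∈ U, F a = F b ↔ g a = g b) :
    (F '' U).ncard = (g '' U).ncard := by
  rcases isEmpty_or_nonempty α with hα | hα
  · simp [Set.eq_empty_of_isEmpty U]
  set ψ : β → γ := fun b => g (Function.invFunOn F U b)
  have hψ : ∀ a ∈ U, ψ (F a) = g a := fun a ha =>
    (h _ (Function.invFunOn_mem ⟨a, ha, rfl⟩) a ha).mp (Function.invFunOn_eq ⟨a, ha, rfl⟩)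
  have hinj : Set.InjOn ψ (F '' U) := by
    rintro _ ⟨a, ha, rfl⟩ _ ⟨b, hb, rfl⟩ hab
    rw [hψ a ha, hψ b hb] at hab
    exact (h a ha b hb).mpr hab
  rw [← hinj.ncard_image, Set.image_image, Set.image_congr hψ]

theorem ncard_setOf_pow_eq_one_of_cast_ne_zero {K : Type*} [Field K] [IsAlgClosed K] {m : ℕ}
    (hm : (m : K) ≠ 0) : {x : K | x ^ m = 1}.ncard = m := by
  have hm₀ : 0 < m := Nat.pos_of_ne_zero (by rintro rfl; exact hm Nat.cast_zero)
  have hsep : (Polynomial.X ^ m - 1 : Polynomial K).Separable :=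
    Polynomial.X_pow_sub_one_separable_iff.mpr hm
  have hroots : {x : K | x ^ m = 1} = ↑(Polynomial.nthRootsFinset m (1 : K)) := by
    ext x
    simp [Polynomial.mem_nthRootsFinset hm₀]
  have hcard : Multiset.card (Polynomial.nthRoots m (1 : K)) = m := by
    rw [Polynomial.nthRoots, Polynomial.splits_iff_card_roots.mp (IsAlgClosed.splits _),
      Polynomial.natDegree_X_pow_sub_C]
  have hnodup : (Polynomial.nthRoots m (1 : K)).Nodup := by
    rw [Polynomial.nthRoots, map_one]
    exact Polynomial.nodup_roots hsep
  rw [hroots, Set.ncard_coe_finset, Polynomial.nthRootsFinset_def,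
    Multiset.toFinset_card_of_nodup hnodup, hcard]

theorem coprimePart_eq_ordCompl {p : ℕ} (hp : p.Prime) (m : ℕ) :
    coprimePart p m = ordCompl[p] m := by
  rw [coprimePart, Nat.factorization_def m hp]

theorem ncard_setOf_pow_eq_one {K : Type*} [Field K] [IsAlgClosed K] (p : ℕ) [Fact p.Prime]
    [CharP K p] {m : ℕ} (hm : m ≠ 0) : {x : K | x ^ m = 1}.ncard = coprimePart p m := by
  have hp : p.Prime := Fact.out
  have hpow : {x : K | x ^ m = 1} = {x : K | x ^ ordCompl[p] m = 1} := by
    ext x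
    conv_lhs => rw [Set.mem_ofPred_eq, ← Nat.ordProj_mul_ordCompl_eq_self m p]
    exact ExpChar.pow_prime_pow_mul_eq_one_iff _ _ _ x
  have hcast : ((ordCompl[p] m : ℕ) : K) ≠ 0 := by
    rw [Ne, CharP.cast_eq_zero_iff K p]
    exact Nat.not_dvd_ordCompl hp hm
  rw [hpow, ncard_setOf_pow_eq_one_of_cast_ne_zero hcast, coprimePart_eq_ordCompl hp]

theorem rescale_eq_rescale_iff {R : Type*} [CommRing R] [IsDomain R] (φ : R⟦X⟧) (ρ σ : R) :
    rescale ρ φ = rescale σ φ ↔ ∀ j, coeff j φ ≠ 0 → ρ ^ j = σ ^ j := by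
  simp only [PowerSeries.ext_iff, coeff_rescale, mul_eq_mul_right_iff, or_iff_not_imp_right]

theorem pow_gcd_finsetGcd_eq_one_iff {G : Type*} [Monoid G] {u : G} {n : ℕ} (hu : u ^ n = 1)
    (S : Finset ℕ) : u ^ Nat.gcd n (S.gcd id) = 1 ↔ ∀ j ∈ S, u ^ j = 1 := by
  simp only [← orderOf_dvd_iff_pow_eq_one, Nat.dvd_gcd_iff, Finset.dvd_gcd_iff, id]
  exact and_iff_right (orderOf_dvd_of_pow_eq_one hu)

theorem rescale_eq_rescale_iff_pow_eq_pow {K : Type*} [Field K] {n : ℕ} (hn : n ≠ 0)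
    {φ : K⟦X⟧} {S : Finset ℕ} (hS : ∀ j, coeff j φ ≠ 0 ↔ j ∈ S) {ρ σ : K} (hρ : ρ ^ n = 1)
    (hσ : σ ^ n = 1) :
    rescale ρ φ = rescale σ φ ↔ ρ ^ Nat.gcd n (S.gcd id) = σ ^ Nat.gcd n (S.gcd id) := by
  have hσ₀ : σ ≠ 0 := by rintro rfl; simp [zero_pow hn] at hσ
  have hquot : (ρ / σ) ^ n = 1 := by rw [div_pow, hρ, hσ, div_one]
  simp only [rescale_eq_rescale_iff, hS, ← div_eq_one_iff_eq (pow_ne_zero _ hσ₀), ← div_pow,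
    pow_gcd_finsetGcd_eq_one_iff hquot]

theorem image_pow_setOf_pow_eq_one {K : Type*} [Field K] [IsAlgClosed K] {d m : ℕ}
    (hd : 0 < d) : (· ^ d) '' {ρ : K | ρ ^ (d * m) = 1} = {x : K | x ^ m = 1} := by
  ext x
  constructor
  · rintro ⟨ρ, hρ, rfl⟩
    simpa only [Set.mem_ofPred_eq, ← pow_mul] using hρ
  · intro hx
    obtain ⟨ρ, rfl⟩ := IsAlgClosed.exists_pow_nat_eq x hd
    exact ⟨ρ, by simpa only [Set.mem_ofPred_eq, pow_mul] using hx, rfl⟩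

theorem statement16_general (K : Type*) [Field K] [IsAlgClosed K]
    (p : ℕ) [Fact p.Prime] [CharP K p]
    (n : ℕ) (hn : 0 < n)
    (ζ : PowerSeries K)
    (M : ℕ)
    (d : ℕ)
    (hd : d = Nat.gcd n
      (((Finset.range M).filter fun j => PowerSeries.coeff j ζ ≠ 0).gcd id)) :
    Set.ncard
        ((fun ρ : K => PowerSeries.rescale ρ
            (PowerSeries.mk fun j => if j < M then PowerSeries.coeff j ζ else 0)) ''
          {ρ : K | ρ ^ n = 1}) =
      coprimePart p (n / d) := by
  have hdn : d * (n / d) = n := Nat.mul_div_cancel' (hd ▸ Nat.gcd_dvd_left _ _)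
  have hd₀ : 0 < d := hd ▸ Nat.gcd_pos_of_pos_left _ hn
  have hm : n / d ≠ 0 := by
    rintro h
    rw [h, mul_zero] at hdn
    exact hn.ne hdn
  have hsupport : ∀ j, coeff j (PowerSeries.mk fun j => if j < M then coeff j ζ else 0) ≠ 0 ↔
      j ∈ (Finset.range M).filter fun j => coeff j ζ ≠ 0 := by
    intro j
    simp only [coeff_mk, Finset.mem_filter, Finset.mem_range, ne_eq, ite_eq_right_iff,
      Classical.not_imp]
  rw [ncard_image_eq_ncard_image_of_eq_iff (g := (· ^ d)) fun ρ hρ σ hσ =>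
      hd ▸ rescale_eq_rescale_iff_pow_eq_pow hn.ne' hsupport hρ hσ,
    ← hdn, image_pow_setOf_pow_eq_one hd₀, hdn,
    ncard_setOf_pow_eq_one p hm]

/-- In characteristic `p > 0`, for `ζ` nonzero satisfying the
minimality condition with respect to `n`, the truncation `ζ_{<M}` of `ζ` below
degree `M` has exactly `m[:p]` distinct conjugates under rescaling by `n`-th roots
of unity, where `m = n/d` and `d` is the gcd of `n` together with all exponents
`j < M` in the support of `ζ`. -/
theorem statement16 (K : Type*) [Field K] [IsAlgClosed K]
    (p : ℕ) [Fact p.Prime] [CharP K p]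
    (n : ℕ) (hn : 0 < n)
    (ζ : PowerSeries K) (hζ : ζ ≠ 0) (hmin : MinimalDenom K n ζ)
    (M : ℕ) (hM : 0 < M)
    (d : ℕ)
    (hd : d = Nat.gcd n
      (((Finset.range M).filter fun j => PowerSeries.coeff j ζ ≠ 0).gcd id)) :
    Set.ncard
        ((fun ρ : K => PowerSeries.rescale ρ
            (PowerSeries.mk fun j => if j < M then PowerSeries.coeff j ζ else 0)) ''
          {ρ : K | ρ ^ n = 1}) =
      coprimePart p (n / d) :=
  statement16_general K p n hn ζ M d hd

end PaperStmt
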